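/- arXiv:1812.09460 — 5 statements merged into one kernel-verified Lean document; each statement's English description precedes it below -/
import Mathlib

section
/- Let G₀ be a weighted digraph on nodes {1,...,N} with nonnegative adjacency matrix A = [a_ij] and Laplacian L = D - A where D = diag of row sums. Let C₀ be the diagonal matrix with first L diagonal entries equal to 1 and the rest 0 (1 ≤ L ≤ N). Suppose that for every node i ∈ {L+1,...,N} there exists a node j ∈ {1,...,L} and a directed path from j to i in G₀. Then for any μ₀ with 0 < μ₀ < 1/max_i Σ_j a_ij, all eigenvalues of the matrix (I_N - C₀)(I_N - μ₀ L) lie strictly inside the unit disk of the complex plane. -/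
/-!
The choice of `μ₀` makes `P = I - μ₀ L` entrywise nonnegative with unit row sums, so
`M = (I - C₀) P` is nonnegative with leader rows equal to zero and follower rows summing to one.
The row sums of `M ^ k` are then nonincreasing in `k`, and a row whose sum has dropped below one
passes the deficit on, one power later, to every node it feeds with positive weight. As every node
is reached from a leader, some power `M ^ K` has all row sums `< 1`, i.e. `‖M ^ K‖_∞ < 1`, and
every eigenvalue `z` of `M` satisfies `‖z‖ ^ K ≤ ‖M ^ K‖_∞ < 1`.
-/

theorem Finset.mul_le_one_of_lt_one_div_sup' {ι : Type*} {s : Finset ι} (hs : s.Nonempty)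
    {g : ι → ℝ} {μ : ℝ} (hμ : 0 < μ) (h : μ < 1 / s.sup' hs g) {i : ι} (hi : i ∈ s) :
    μ * g i ≤ 1 := by
  have hpos : 0 < s.sup' hs g := one_div_pos.mp (hμ.trans h)
  calc μ * g i ≤ μ * s.sup' hs g := mul_le_mul_of_nonneg_left (le_sup' g hi) hμ.le
    _ ≤ 1 := ((lt_div_iff₀ hpos).mp h).le

namespace Matrix

section Nonneg

variable {n : Type*} [Fintype n] {M : Matrix n n ℝ}

theorem mulVec_mono_of_nonneg (hM : ∀ i j, 0 ≤ M i j) {v w : n → ℝ} (hvw : v ≤ w) :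
    M *ᵥ v ≤ M *ᵥ w := fun i =>
  Finset.sum_le_sum fun j _ => mul_le_mul_of_nonneg_left (hvw j) (hM i j)

theorem mulVec_apply_lt_one_of_pos (hM : ∀ i j, 0 ≤ M i j) (hrow : M *ᵥ 1 ≤ 1)
    {v : n → ℝ} (hv : v ≤ 1) {i j : n} (hij : 0 < M i j) (hj : v j < 1) : (M *ᵥ v) i < 1 :=
  calc (M *ᵥ v) i < (M *ᵥ 1) i :=
        Finset.sum_lt_sum (fun l _ => mul_le_mul_of_nonneg_left (hv l) (hM i l))
          ⟨j, Finset.mem_univ j, mul_lt_mul_of_pos_left hj hij⟩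
    _ ≤ 1 := hrow i

end Nonneg

variable {n R : Type*} [Fintype n] [DecidableEq n]

/-- Row `i` of `A` carries the weights of the edges into node `i`. -/
def weightedLaplacian [Ring R] (A : Matrix n n R) : Matrix n n R :=
  diagonal (fun i => ∑ j, A i j) - A

section Laplacian

variable [CommRing R] {A : Matrix n n R} {μ : R}

theorem weightedLaplacian_mulVec_one : weightedLaplacian A *ᵥ 1 = 0 := by
  ext i
  rw [weightedLaplacian, sub_mulVec, Pi.sub_apply, mulVec_diagonal]
  simp [mulVec, dotProduct]

theorem one_sub_smul_weightedLaplacian_mulVec_one : (1 - μ • weightedLaplacian A) *ᵥ 1 = 1 := by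
  rw [sub_mulVec, one_mulVec, smul_mulVec, weightedLaplacian_mulVec_one, smul_zero, sub_zero]

theorem one_sub_smul_weightedLaplacian_apply (i j : n) :
    (1 - μ • weightedLaplacian A) i j = (if i = j then 1 - μ * ∑ l, A i l else 0) + μ * A i j := by
  by_cases h : i = j
  · subst h
    simp [weightedLaplacian]
    ring
  · simp [weightedLaplacian, h]

theorem mul_le_one_sub_smul_weightedLaplacian_apply [LinearOrder R] [IsStrictOrderedRing R]
    {i : n} (hμ : μ * ∑ l, A i l ≤ 1) (j : n) : μ * A i j ≤ (1 - μ • weightedLaplacian A) i j := by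
  rw [one_sub_smul_weightedLaplacian_apply]
  split_ifs <;> linarith

end Laplacian

attribute [local instance] Matrix.linftyOpNormedRing Matrix.linftyOpNormedAlgebra in
theorem norm_lt_one_of_mem_spectrum {B : Matrix n n ℂ} (hB : ∀ i, ∑ j, ‖B i j‖ < 1) {z : ℂ}
    (hz : z ∈ spectrum ℂ B) : ‖z‖ < 1 := by
  have : Nonempty n := by
    by_contra h
    rw [not_nonempty_iff] at h
    simp [spectrum.of_subsingleton] at hz
  refine (spectrum.norm_le_norm_of_mem hz).trans_lt ?_
  rw [linfty_opNorm_def, ← NNReal.coe_one, NNReal.coe_lt_coe, Finset.sup_lt_iff one_pos]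
  intro i _
  rw [← NNReal.coe_lt_coe]
  push_cast
  exact hB i

section Substochastic

variable {M : Matrix n n ℝ}

theorem pow_succ_mulVec_one_le (hM : ∀ i j, 0 ≤ M i j) (hrow : M *ᵥ 1 ≤ 1) (k : ℕ) :
    M ^ (k + 1) *ᵥ 1 ≤ M ^ k *ᵥ 1 := by
  induction k with
  | zero => simpa using hrow
  | succ k ih =>
    have h := mulVec_mono_of_nonneg hM ih
    rwa [mulVec_mulVec, mulVec_mulVec, ← pow_succ', ← pow_succ'] at h

theorem antitone_pow_mulVec_one (hM : ∀ i j, 0 ≤ M i j) (hrow : M *ᵥ 1 ≤ 1) (i : n) :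
    Antitone fun k => (M ^ k *ᵥ 1) i :=
  antitone_nat_of_succ_le fun k => pow_succ_mulVec_one_le hM hrow k i

theorem pow_mulVec_one_le_one (hM : ∀ i j, 0 ≤ M i j) (hrow : M *ᵥ 1 ≤ 1) (k : ℕ) :
    M ^ k *ᵥ 1 ≤ 1 := fun i => by
  simpa using antitone_pow_mulVec_one hM hrow i (Nat.zero_le k)

theorem exists_pow_mulVec_one_lt_one_of_reflTransGen (hM : ∀ i j, 0 ≤ M i j)
    (hrow : M *ᵥ 1 ≤ 1) {R : n → n → Prop} (hR : ∀ p q, R p q → (M *ᵥ 1) q < 1 ∨ 0 < M q p)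
    {j i : n} (hj : (M *ᵥ 1) j < 1) (hji : Relation.ReflTransGen R j i) :
    ∃ k, (M ^ k *ᵥ 1) i < 1 := by
  induction hji with
  | refl => exact ⟨1, by simpa using hj⟩
  | @tail p q _ hpq ih =>
    obtain ⟨k, hk⟩ := ih
    rcases hR p q hpq with hq | hqp
    · exact ⟨1, by simpa using hq⟩
    · refine ⟨k + 1, ?_⟩
      rw [pow_succ', ← mulVec_mulVec]
      exact mulVec_apply_lt_one_of_pos hM hrow (pow_mulVec_one_le_one hM hrow k) hqp hk

theorem exists_pos_forall_pow_mulVec_one_lt_one (hM : ∀ i j, 0 ≤ M i j) (hrow : M *ᵥ 1 ≤ 1)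
    (hdef : ∀ i, ∃ k, (M ^ k *ᵥ 1) i < 1) : ∃ K, 0 < K ∧ ∀ i, (M ^ K *ᵥ 1) i < 1 := by
  have hev : ∀ᶠ K in Filter.atTop, ∀ i, (M ^ K *ᵥ 1) i < 1 :=
    Filter.eventually_all.2 fun i =>
      let ⟨k, hk⟩ := hdef i
      Filter.eventually_atTop.2
        ⟨k, fun K hK => (antitone_pow_mulVec_one hM hrow i hK).trans_lt hk⟩
  exact (hev.and (Filter.eventually_gt_atTop 0)).exists.imp fun K hK => ⟨hK.2, hK.1⟩

theorem norm_lt_one_of_mem_spectrum_of_pow_mulVec_one_lt_one (hM : ∀ i j, 0 ≤ M i j)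
    {K : ℕ} (hK : 0 < K) (hMK : ∀ i, (M ^ K *ᵥ 1) i < 1) {z : ℂ}
    (hz : z ∈ spectrum ℂ (M.map (Complex.ofReal ·))) : ‖z‖ < 1 := by
  have hzK : z ^ K ∈ spectrum ℂ ((M ^ K).map Complex.ofRealHom) := by
    rw [Matrix.map_pow]
    exact spectrum.pow_mem_pow _ K hz
  have hnorm : ‖z ^ K‖ < 1 := norm_lt_one_of_mem_spectrum (fun i => by
    simpa [mulVec, dotProduct, abs_of_nonneg (pow_apply_nonneg hM K i _)] using hMK i) hzK
  rw [norm_pow] at hnorm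
  exact (pow_lt_one_iff_of_nonneg (norm_nonneg z) hK.ne').mp hnorm

theorem norm_lt_one_of_mem_spectrum_one_sub_diagonal_mul {P : Matrix n n ℝ}
    (hP : ∀ i j, 0 ≤ P i j) (hP1 : P *ᵥ 1 = 1) (leader : n → Prop) [DecidablePred leader]
    (hreach : ∀ i, ∃ j, leader j ∧ Relation.ReflTransGen (fun p q => 0 < P q p) j i) {z : ℂ}
    (hz : z ∈ spectrum ℂ
      (((1 - diagonal (fun i => if leader i then 1 else 0)) * P).map (Complex.ofReal ·))) :
    ‖z‖ < 1 := by
  set f : n → ℝ := fun i => if leader i then 0 else 1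
  have hmask : 1 - diagonal (fun i => if leader i then (1 : ℝ) else 0) = diagonal f := by
    rw [← diagonal_one, diagonal_sub]
    congr 1
    ext i
    by_cases h : leader i <;> simp [f, h]
  rw [hmask] at hz
  set M := diagonal f * P
  have hf : ∀ i, 0 ≤ f i := fun i => by by_cases h : leader i <;> simp [f, h]
  have hM : ∀ i j, 0 ≤ M i j := fun i j => by
    simpa only [M, diagonal_mul] using mul_nonneg (hf i) (hP i j)
  have hM1 : M *ᵥ 1 = f := by
    ext i
    rw [← mulVec_mulVec, hP1, mulVec_diagonal, Pi.one_apply, mul_one]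
  have hrow : M *ᵥ 1 ≤ 1 := fun i => by
    by_cases h : leader i <;> simp [hM1, f, h]
  have hstep : ∀ p q, 0 < P q p → (M *ᵥ 1) q < 1 ∨ 0 < M q p := fun p q hqp => by
    by_cases h : leader q
    · simp [hM1, f, h]
    · exact Or.inr (by simpa [M, diagonal_mul, f, h] using hqp)
  have hdef : ∀ i, ∃ k, (M ^ k *ᵥ 1) i < 1 := fun i => by
    obtain ⟨j, hj, hji⟩ := hreach i
    exact exists_pow_mulVec_one_lt_one_of_reflTransGen hM hrow hstep (by simp [hM1, f, hj]) hji
  obtain ⟨K, hK, hMK⟩ := exists_pos_forall_pow_mulVec_one_lt_one hM hrow hdef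
  exact norm_lt_one_of_mem_spectrum_of_pow_mulVec_one_lt_one hM hK hMK hz

end Substochastic

end Matrix

theorem stmt0_general (N Lnum : ℕ) (hN : 0 < N)
    (A : Matrix (Fin N) (Fin N) ℝ) (hA : ∀ i j, 0 ≤ A i j)
    (Lap : Matrix (Fin N) (Fin N) ℝ)
    (hLap : Lap = Matrix.diagonal (fun i => ∑ j, A i j) - A)
    (C₀ : Matrix (Fin N) (Fin N) ℝ)
    (hC₀ : C₀ = Matrix.diagonal (fun i : Fin N => if (i : ℕ) < Lnum then (1 : ℝ) else 0))
    (hpath : ∀ i : Fin N, Lnum ≤ (i : ℕ) →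
      ∃ j : Fin N, (j : ℕ) < Lnum ∧
        Relation.ReflTransGen (fun p q : Fin N => 0 < A q p) j i)
    (μ₀ : ℝ) (hμ₀ : 0 < μ₀)
    (hμ₀' : μ₀ < 1 / (Finset.univ.sup' ⟨⟨0, hN⟩, Finset.mem_univ _⟩
      (fun i : Fin N => ∑ j, A i j))) :
    ∀ z ∈ spectrum ℂ (((1 - C₀) * (1 - μ₀ • Lap)).map (Complex.ofReal ·)),
      ‖z‖ < 1 := by
  obtain rfl : Lap = Matrix.weightedLaplacian A := hLap
  subst hC₀
  have hedge : ∀ i j, μ₀ * A i j ≤ (1 - μ₀ • Matrix.weightedLaplacian A) i j := fun i =>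
    Matrix.mul_le_one_sub_smul_weightedLaplacian_apply
      (Finset.mul_le_one_of_lt_one_div_sup' _ hμ₀ hμ₀' (Finset.mem_univ i))
  refine fun z => Matrix.norm_lt_one_of_mem_spectrum_one_sub_diagonal_mul
    (fun i j => (mul_nonneg hμ₀.le (hA i j)).trans (hedge i j))
    Matrix.one_sub_smul_weightedLaplacian_mulVec_one (fun i : Fin N => (i : ℕ) < Lnum)
    (fun i => ?_)
  by_cases hi : (i : ℕ) < Lnum
  · exact ⟨i, hi, .refl⟩
  · obtain ⟨j, hj, hji⟩ := hpath i (not_lt.mp hi)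
    exact ⟨j, hj, Relation.ReflTransGen.mono
      (fun p q hqp => (mul_pos hμ₀ hqp).trans_le (hedge q p)) _ _ hji⟩

/-- all eigenvalues of `(I - C₀)(I - μ₀ L)` lie strictly inside the
unit disk, where `L` is the Laplacian of a weighted digraph whose nodes with
index `≥ Lnum` are all reachable from some node with index `< Lnum`. -/
theorem stmt0 (N Lnum : ℕ) (hN : 0 < N) (hL1 : 1 ≤ Lnum) (hLN : Lnum ≤ N)
    (A : Matrix (Fin N) (Fin N) ℝ) (hA : ∀ i j, 0 ≤ A i j)
    (Lap : Matrix (Fin N) (Fin N) ℝ)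
    (hLap : Lap = Matrix.diagonal (fun i => ∑ j, A i j) - A)
    (C₀ : Matrix (Fin N) (Fin N) ℝ)
    (hC₀ : C₀ = Matrix.diagonal (fun i : Fin N => if (i : ℕ) < Lnum then (1 : ℝ) else 0))
    (hpath : ∀ i : Fin N, Lnum ≤ (i : ℕ) →
      ∃ j : Fin N, (j : ℕ) < Lnum ∧
        Relation.ReflTransGen (fun p q : Fin N => 0 < A q p) j i)
    (μ₀ : ℝ) (hμ₀ : 0 < μ₀)
    (hμ₀' : μ₀ < 1 / (Finset.univ.sup' ⟨⟨0, hN⟩, Finset.mem_univ _⟩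
      (fun i : Fin N => ∑ j, A i j))) :
    ∀ z ∈ spectrum ℂ (((1 - C₀) * (1 - μ₀ • Lap)).map (Complex.ofReal ·)),
      ‖z‖ < 1 :=
  stmt0_general N Lnum hN A hA Lap hLap C₀ hC₀ hpath μ₀ hμ₀ hμ₀'
end

section
/- Consider the leader-following consensus iteration λ(k+1) = ε A_{*0} 1_N λ₀ + (I_N - ε(L + A_{*0})) λ(k) on ℝ^N, where L is the Laplacian of a weighted digraph on N nodes, A_{*0} = diag(a_{10},...,a_{N0}) with a_{i0} ∈ {0,1}, and ε = diag(ε_1,...,ε_N) with 0 < ε_i < 1/(Σ_{j=0}^N a_{ij}). If the augmented digraph on {0,1,...,N} (adding edges (0,i) for each i with a_{i0}=1) contains a spanning tree rooted at node 0, then λ(k) → λ₀ 1_N as k → ∞, for every initial condition λ(0). -/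
/-!
Subtracting the leader value turns the iteration into `e(k+1) = P e(k)` for a nonnegative
matrix `P` whose row sums are `1 - ε_i a_{i0} ≤ 1`, with a strict deficit at the followers
that hear the leader. The row sums `u_s = P^s 1` of the powers decrease in `s`, and a deficit
at `j` spreads in one step to every node listening to `j`; along the spanning tree some power
`P^T` has all row sums `< 1`, so the sup norm of `e` contracts by a fixed factor every `T`
steps.
-/

open Filter Topology Matrix

lemma tendsto_zero_of_antitone_of_le_mul {f : ℕ → ℝ} (hf₀ : ∀ k, 0 ≤ f k) (hf : Antitone f)
    {T : ℕ} {ρ : ℝ} (hρ : ρ < 1) (hT : ∀ k, f (k + T) ≤ ρ * f k) :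
    Tendsto f atTop (𝓝 0) := by
  have hlim := tendsto_atTop_ciInf hf ⟨0, by rintro _ ⟨k, rfl⟩; exact hf₀ k⟩
  have hL₀ : 0 ≤ ⨅ k, f k := le_ciInf hf₀
  have hshift := (tendsto_add_atTop_iff_nat T).2 hlim
  have hL : ⨅ k, f k ≤ ρ * ⨅ k, f k := le_of_tendsto_of_tendsto' hshift (hlim.const_mul ρ) hT
  have hL_eq : ⨅ k, f k = 0 := by nlinarith
  rwa [hL_eq] at hlim

namespace Matrix

variable {ι : Type*} [Fintype ι]

lemma mulVec_mono_of_nonneg_s10 {Q : Matrix ι ι ℝ} (hQ : ∀ i j, 0 ≤ Q i j) {x y : ι → ℝ}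
    (hxy : x ≤ y) : Q *ᵥ x ≤ Q *ᵥ y := fun i =>
  Finset.sum_le_sum fun j _ => mul_le_mul_of_nonneg_left (hxy j) (hQ i j)

lemma mulVec_one_nonneg {Q : Matrix ι ι ℝ} (hQ : ∀ i j, 0 ≤ Q i j) (i : ι) :
    0 ≤ (Q *ᵥ 1) i :=
  Finset.sum_nonneg fun j _ => mul_nonneg (hQ i j) zero_le_one

lemma abs_mulVec_apply_le {Q : Matrix ι ι ℝ} (hQ : ∀ i j, 0 ≤ Q i j) (x : ι → ℝ) (i : ι) :
    |(Q *ᵥ x) i| ≤ ‖x‖ * (Q *ᵥ 1) i :=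
  calc |(Q *ᵥ x) i| = |∑ j, Q i j * x j| := rfl
    _ ≤ ∑ j, |Q i j * x j| := Finset.abs_sum_le_sum_abs _ _
    _ ≤ ∑ j, Q i j * ‖x‖ := Finset.sum_le_sum fun j _ => by
        rw [abs_mul, abs_of_nonneg (hQ i j)]
        exact mul_le_mul_of_nonneg_left (norm_le_pi_norm x j) (hQ i j)
    _ = ‖x‖ * (Q *ᵥ 1) i := by simp [mulVec, dotProduct, Finset.sum_mul, mul_comm]

lemma norm_mulVec_le {Q : Matrix ι ι ℝ} (hQ : ∀ i j, 0 ≤ Q i j) (x : ι → ℝ) :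
    ‖Q *ᵥ x‖ ≤ ‖x‖ * ‖Q *ᵥ 1‖ :=
  (pi_norm_le_iff_of_nonneg (by positivity)).2 fun i =>
    (abs_mulVec_apply_le hQ x i).trans <|
      mul_le_mul_of_nonneg_left ((le_abs_self _).trans (norm_le_pi_norm (Q *ᵥ 1) i))
        (norm_nonneg x)

variable [DecidableEq ι] {P : Matrix ι ι ℝ}

section Substochastic

variable (hP : ∀ i j, 0 ≤ P i j) (hrow : ∀ i, ∑ j, P i j ≤ 1)
include hP hrow

lemma antitone_pow_mulVec_one_s10 : Antitone fun s => P ^ s *ᵥ 1 := by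
  refine antitone_nat_of_succ_le fun s => ?_
  rw [pow_succ, ← mulVec_mulVec]
  exact mulVec_mono_of_nonneg_s10 (pow_apply_nonneg hP s) fun i => by
    simpa [mulVec, dotProduct] using hrow i

lemma pow_mulVec_one_le_one_s10 (s : ℕ) : P ^ s *ᵥ 1 ≤ 1 := by
  simpa using antitone_pow_mulVec_one_s10 hP hrow (Nat.zero_le s)

lemma pow_succ_mulVec_one_lt_one {s : ℕ} {i j : ι} (hj : (P ^ s *ᵥ 1) j < 1)
    (hij : 0 < P i j) : (P ^ (s + 1) *ᵥ 1) i < 1 := by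
  rw [pow_succ', ← mulVec_mulVec]
  calc (P *ᵥ (P ^ s *ᵥ 1)) i = ∑ l, P i l * (P ^ s *ᵥ 1) l := rfl
    _ < ∑ l, P i l := by
        simpa using Finset.sum_lt_sum
          (fun l _ => mul_le_mul_of_nonneg_left (pow_mulVec_one_le_one_s10 hP hrow s l) (hP i l))
          ⟨j, Finset.mem_univ j, mul_lt_mul_of_pos_left hj hij⟩
    _ ≤ 1 := hrow i

lemma exists_pow_mulVec_one_lt_one {i j : ι} (hj : ∑ l, P j l < 1)
    (hji : Relation.ReflTransGen (fun p q => 0 < P q p) j i) :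
    ∃ s, (P ^ s *ᵥ 1) i < 1 := by
  induction hji with
  | refl => exact ⟨1, by simpa [mulVec, dotProduct] using hj⟩
  | tail _ hpq ih =>
    obtain ⟨s, hs⟩ := ih
    exact ⟨s + 1, pow_succ_mulVec_one_lt_one hP hrow hs hpq⟩

lemma exists_norm_pow_mulVec_one_lt_one
    (hreach : ∀ i, ∃ j, ∑ l, P j l < 1 ∧ Relation.ReflTransGen (fun p q => 0 < P q p) j i) :
    ∃ T, ‖P ^ T *ᵥ 1‖ < 1 := by
  choose j hj hji using hreach
  choose s hs using fun i => exists_pow_mulVec_one_lt_one hP hrow (hj i) (hji i)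
  refine ⟨Finset.univ.sup s, (pi_norm_lt_iff one_pos).2 fun i => ?_⟩
  rw [Real.norm_eq_abs, abs_of_nonneg (mulVec_one_nonneg (pow_apply_nonneg hP _) i)]
  exact (antitone_pow_mulVec_one_s10 hP hrow (Finset.le_sup (Finset.mem_univ i)) i).trans_lt (hs i)

theorem tendsto_zero_of_substochastic
    (hreach : ∀ i, ∃ j, ∑ l, P j l < 1 ∧ Relation.ReflTransGen (fun p q => 0 < P q p) j i)
    {x : ℕ → ι → ℝ} (hx : ∀ k, x (k + 1) = P *ᵥ x k) :
    Tendsto x atTop (𝓝 0) := by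
  have hxs : ∀ k s, x (k + s) = P ^ s *ᵥ x k := by
    intro k s
    induction s with
    | zero => simp
    | succ s ih => rw [← add_assoc, hx, ih, mulVec_mulVec, pow_succ']
  have hnorm : ∀ k s, ‖x (k + s)‖ ≤ ‖P ^ s *ᵥ 1‖ * ‖x k‖ := fun k s => by
    rw [hxs, mul_comm]
    exact norm_mulVec_le (pow_apply_nonneg hP s) (x k)
  have hone : ‖P ^ 1 *ᵥ 1‖ ≤ 1 := (pi_norm_le_iff_of_nonneg zero_le_one).2 fun i => by
    rw [Real.norm_eq_abs, abs_of_nonneg (mulVec_one_nonneg (pow_apply_nonneg hP 1) i)]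
    exact pow_mulVec_one_le_one_s10 hP hrow 1 i
  have hanti : Antitone fun k => ‖x k‖ := antitone_nat_of_succ_le fun k =>
    (hnorm k 1).trans (mul_le_of_le_one_left (norm_nonneg _) hone)
  obtain ⟨T, hT⟩ := exists_norm_pow_mulVec_one_lt_one hP hrow hreach
  exact tendsto_zero_iff_norm_tendsto_zero.2 <|
    tendsto_zero_of_antitone_of_le_mul (fun k => norm_nonneg _) hanti hT (hnorm · T)

end Substochastic

end Matrix

section LeaderFollower

variable {ι : Type*} [Fintype ι] [DecidableEq ι] (A : Matrix ι ι ℝ) (a0 ε : ι → ℝ)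

/-- The paper's `I - ε (L + A_{*0})`, with Laplacian `L = diag (∑ⱼ A i j) - A`. -/
def leaderFollowerMatrix : Matrix ι ι ℝ :=
  diagonal (fun i => 1 - ε i * (a0 i + ∑ j, A i j)) + diagonal ε * A

lemma leaderFollowerMatrix_mulVec_apply (y : ι → ℝ) (i : ι) :
    (leaderFollowerMatrix A a0 ε *ᵥ y) i =
      (1 - ε i * (a0 i + ∑ j, A i j)) * y i + ε i * ∑ j, A i j * y j := by
  rw [leaderFollowerMatrix, add_mulVec, ← mulVec_mulVec, Pi.add_apply, mulVec_diagonal,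
    mulVec_diagonal]
  rfl

lemma leaderFollowerMatrix_mulVec_sub_const (x : ι → ℝ) (c : ℝ) (i : ι) :
    (leaderFollowerMatrix A a0 ε *ᵥ (x - fun _ => c)) i =
      x i + ε i * ((∑ j, A i j * (x j - x i)) + a0 i * (c - x i)) - c := by
  simp only [leaderFollowerMatrix_mulVec_apply, Pi.sub_apply, mul_sub, Finset.sum_sub_distrib,
    ← Finset.sum_mul]
  ring

lemma sum_leaderFollowerMatrix_apply (i : ι) :
    ∑ j, leaderFollowerMatrix A a0 ε i j = 1 - ε i * a0 i := by
  simp only [leaderFollowerMatrix, Matrix.add_apply, diagonal_mul, diagonal_apply,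
    Finset.sum_add_distrib, Finset.sum_ite_eq, Finset.mem_univ, if_true, ← Finset.mul_sum]
  ring

variable {A a0 ε} (hε : ∀ i, ε i * (a0 i + ∑ j, A i j) ≤ 1)
include hε

lemma mul_le_leaderFollowerMatrix_apply (i j : ι) :
    ε i * A i j ≤ leaderFollowerMatrix A a0 ε i j := by
  rw [leaderFollowerMatrix, Matrix.add_apply, diagonal_mul]
  refine le_add_of_nonneg_left ?_
  by_cases h : i = j <;> simp [h, hε j]

lemma leaderFollowerMatrix_apply_nonneg (hA : ∀ i j, 0 ≤ A i j) (hε₀ : ∀ i, 0 ≤ ε i)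
    (i j : ι) : 0 ≤ leaderFollowerMatrix A a0 ε i j :=
  (mul_nonneg (hε₀ i) (hA i j)).trans (mul_le_leaderFollowerMatrix_apply hε i j)

lemma leaderFollowerMatrix_apply_pos {i j : ι} (hεi : 0 < ε i) (hAij : 0 < A i j) :
    0 < leaderFollowerMatrix A a0 ε i j :=
  (mul_pos hεi hAij).trans_le (mul_le_leaderFollowerMatrix_apply hε i j)

end LeaderFollower

/-- leader-following consensus. If every follower is reachable
from the leader (node 0) and step sizes satisfy
`0 < ε_i < 1/(a_{i0} + Σ_j a_{ij})`, then every follower state converges to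
the leader value `λ₀`. -/
theorem stmt10 (N : ℕ)
    (A : Matrix (Fin N) (Fin N) ℝ) (hA : ∀ i j, 0 ≤ A i j)
    (a0 : Fin N → ℝ) (ha0 : ∀ i, a0 i = 0 ∨ a0 i = 1)
    (ε : Fin N → ℝ) (hε : ∀ i, 0 < ε i ∧ ε i < 1 / (a0 i + ∑ j, A i j))
    (htree : ∀ i : Fin N, ∃ j : Fin N, a0 j = 1 ∧
      Relation.ReflTransGen (fun p q : Fin N => 0 < A q p) j i)
    (lam0 : ℝ) (lam : ℕ → Fin N → ℝ)
    (hrec : ∀ k i, lam (k + 1) i = lam k i +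
      ε i * ((∑ j, A i j * (lam k j - lam k i)) + a0 i * (lam0 - lam k i))) :
    ∀ i : Fin N, Filter.Tendsto (fun k => lam k i) Filter.atTop (nhds lam0) := by
  have hε₁ : ∀ i, ε i * (a0 i + ∑ j, A i j) ≤ 1 := fun i =>
    have hden : 0 < a0 i + ∑ j, A i j := one_div_pos.1 ((hε i).1.trans (hε i).2)
    ((lt_div_iff₀ hden).1 (hε i).2).le
  have ha0_nonneg : ∀ i, 0 ≤ a0 i := fun i => by rcases ha0 i with h | h <;> simp [h]
  set P := leaderFollowerMatrix A a0 ε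
  have hrow : ∀ i, ∑ j, P i j ≤ 1 := fun i => by
    rw [sum_leaderFollowerMatrix_apply]
    linarith [mul_nonneg (hε i).1.le (ha0_nonneg i)]
  have hreach : ∀ i, ∃ j, ∑ l, P j l < 1 ∧
      Relation.ReflTransGen (fun p q => 0 < P q p) j i := fun i => by
    obtain ⟨j, hj, hji⟩ := htree i
    refine ⟨j, ?_, Relation.ReflTransGen.mono
      (fun p q hpq => leaderFollowerMatrix_apply_pos hε₁ (hε q).1 hpq) _ _ hji⟩
    rw [sum_leaderFollowerMatrix_apply, hj]
    linarith [(hε j).1]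
  have herr : ∀ k, lam (k + 1) - (fun _ => lam0) = P *ᵥ (lam k - fun _ => lam0) := fun k =>
    funext fun i => by rw [leaderFollowerMatrix_mulVec_sub_const, Pi.sub_apply, hrec]
  have hlim := tendsto_zero_of_substochastic
    (leaderFollowerMatrix_apply_nonneg hε₁ hA fun i => (hε i).1.le) hrow hreach
    (x := fun k => lam k - fun _ => lam0) herr
  intro i
  simpa using (tendsto_pi_nhds.1 hlim i).add_const lam0
end

section
/- Consider the coupled iteration λ(k+1) = (I_N - ε' L) λ(k) + σ(k) ΔP̂(k) on ℝ^N, where L is the Laplacian of a connected weighted undirected graph, 0 < ε' < 1/max_i Σ_j a_ij (scalar step for simplicity), σ(k) > 0 with σ(k) → 0, and (ΔP̂(k)) is a sequence with sup_k ‖(I_N - J_N) ΔP̂(k)‖ < ∞. Then the disagreement δ_λ(k) = (I_N - J_N) λ(k) converges to 0, i.e., λ_i(k) - λ_j(k) → 0 for all i, j. -/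
/-!
The matrix `P = I - ε'L` is doubly stochastic with a positive diagonal, so by Jensen's
inequality applied row by row it does not increase `∑ xᵢ²`, and it decreases it strictly as soon
as some edge `p ~ q` of the graph has `x_p ≠ x_q`. On the zero-sum vectors, where connectivity
forces such an edge unless `x = 0`, compactness of the unit sphere upgrades this to a uniform
contraction factor `ρ < 1` for the Euclidean norm. The disagreement `δ = (I - J)λ` stays zero-sum
and, since `J` commutes with `P`, obeys `δ(k+1) = Pδ(k) + σ(k)(I - J)ΔP̂(k)`, so
`‖δ(k+1)‖ ≤ ρ‖δ(k)‖ + |σ(k)| C'` with `σ(k) → 0`, which forces `‖δ(k)‖ → 0`.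
-/

open Filter Finset Matrix Topology WithLp

theorem tendsto_zero_of_le_mul_add {a b : ℕ → ℝ} {ρ : ℝ} (hρ₀ : 0 ≤ ρ) (hρ₁ : ρ < 1)
    (ha : ∀ k, 0 ≤ a k) (hab : ∀ k, a (k + 1) ≤ ρ * a k + b k)
    (hb : Tendsto b atTop (𝓝 0)) : Tendsto a atTop (𝓝 0) := by
  refine tendsto_order.2 ⟨fun c hc => .of_forall fun k => hc.trans_le (ha k), fun ε hε => ?_⟩
  obtain ⟨n, hn⟩ := eventually_atTop.1 <|
    hb.eventually (ge_mem_nhds (by positivity : 0 < (1 - ρ) * (ε / 2)))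
  have hstep : ∀ m, a (n + m) ≤ ρ ^ m * a n + ε / 2 := by
    intro m
    induction m with
    | zero => simpa using (half_pos hε).le
    | succ m ih =>
      calc a (n + m + 1) ≤ ρ * a (n + m) + b (n + m) := hab _
        _ ≤ ρ * (ρ ^ m * a n + ε / 2) + (1 - ρ) * (ε / 2) := by
          gcongr
          exact hn _ (Nat.le_add_right n m)
        _ = ρ ^ (m + 1) * a n + ε / 2 := by ring
  have hgeom : Tendsto (fun m => ρ ^ m * a n + ε / 2) atTop (𝓝 (ε / 2)) := by
    simpa using ((tendsto_pow_atTop_nhds_zero_of_lt_one hρ₀ hρ₁).mul_const (a n)).add_const (ε / 2)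
  obtain ⟨M, hM⟩ := eventually_atTop.1 <| hgeom.eventually (gt_mem_nhds (half_lt_self hε))
  refine eventually_atTop.2 ⟨n + M, fun k hk => ?_⟩
  obtain ⟨m, rfl⟩ := Nat.exists_eq_add_of_le (le_of_add_le_left hk)
  exact (hstep m).trans_lt (hM m (by omega))

theorem ContinuousLinearMap.opNorm_lt_one_of_norm_apply_lt {E F : Type*}
    [NormedAddCommGroup E] [NormedSpace ℝ E] [FiniteDimensional ℝ E]
    [SeminormedAddCommGroup F] [NormedSpace ℝ F] (f : E →L[ℝ] F)
    (hf : ∀ x, x ≠ 0 → ‖f x‖ < ‖x‖) : ‖f‖ < 1 := by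
  rcases subsingleton_or_nontrivial E with hE | hE
  · simp [f.opNorm_subsingleton]
  obtain ⟨x₀, hx₀, hmax⟩ := (isCompact_sphere (0 : E) 1).exists_isMaxOn
    (NormedSpace.sphere_nonempty.2 zero_le_one) f.continuous.norm.continuousOn
  rw [mem_sphere_zero_iff_norm] at hx₀
  refine (f.opNorm_le_bound (norm_nonneg _) fun x => ?_).trans_lt
    (hx₀ ▸ hf x₀ (ne_zero_of_norm_ne_zero (by simp [hx₀])))
  rcases eq_or_ne x 0 with rfl | hx
  · simp
  have hunit : ‖x‖⁻¹ • x ∈ Metric.sphere (0 : E) 1 := by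
    simp [norm_smul, inv_mul_cancel₀ (norm_ne_zero_iff.2 hx)]
  calc ‖f x‖ = ‖x‖ * ‖f (‖x‖⁻¹ • x)‖ := by
        rw [map_smul, norm_smul, norm_inv, norm_norm, mul_inv_cancel_left₀ (norm_ne_zero_iff.2 hx)]
    _ ≤ ‖x‖ * ‖f x₀‖ := by gcongr; exact hmax hunit
    _ = ‖f x₀‖ * ‖x‖ := mul_comm _ _

theorem exists_rel_apply_ne_of_apply_ne {ι α : Type*} {r : ι → ι → Prop}
    (hconn : ∀ i j, Relation.ReflTransGen r i j) {x : ι → α} {i j : ι} (hx : x i ≠ x j) :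
    ∃ p q, r p q ∧ x p ≠ x q := by
  by_contra! h
  have hij : Relation.ReflTransGen (· = ·) (x i) (x j) := (hconn i j).lift x h
  exact hx (by rwa [Relation.reflTransGen_eq_self] at hij)

theorem mul_lt_one_of_lt_one_div_sup' {ι : Type*} {s : Finset ι} {hs : s.Nonempty} {f : ι → ℝ}
    {ε : ℝ} (hε : 0 < ε) (h : ε < 1 / s.sup' hs f) {i : ι} (hi : i ∈ s) : ε * f i < 1 := by
  have hsup : 0 < s.sup' hs f := by
    by_contra! hle
    exact (hε.trans h).not_ge (one_div_nonpos.2 hle)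
  calc ε * f i ≤ ε * s.sup' hs f := mul_le_mul_of_nonneg_left (le_sup' f hi) hε.le
    _ < 1 := (lt_div_iff₀ hsup).1 h

section Fintype

variable {ι : Type*} [Fintype ι]

theorem exists_apply_ne_of_sum_eq_zero {x : ι → ℝ} (hsum : ∑ i, x i = 0) (hx : x ≠ 0) :
    ∃ i j, x i ≠ x j := by
  by_contra! hconst
  obtain ⟨i, hi⟩ := Function.ne_iff.1 hx
  have : (Fintype.card ι : ℝ) * x i = 0 := by
    rw [← hsum, ← nsmul_eq_mul, ← card_univ, ← sum_const]
    exact sum_congr rfl fun j _ => hconst i j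
  exact hi ((mul_eq_zero.1 this).resolve_left
    (Nat.cast_ne_zero.2 (Fintype.card_pos_iff.2 ⟨i⟩).ne'))

theorem norm_toLp_two_le (x : ι → ℝ) :
    ‖toLp 2 x‖ ≤ (Fintype.card ι : ℝ) ^ (2 : ℝ)⁻¹ * ‖x‖ := by
  simpa using (PiLp.lipschitzWith_toLp 2 fun _ : ι => ℝ).dist_le_mul x 0

theorem mem_orthogonal_span_one_iff (x : EuclideanSpace ℝ ι) :
    x ∈ (ℝ ∙ toLp 2 (1 : ι → ℝ))ᗮ ↔ ∑ i, x i = 0 := by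
  rw [Submodule.mem_orthogonal_singleton_iff_inner_right]
  simp [EuclideanSpace.inner_eq_star_dotProduct, dotProduct]

theorem exists_norm_mulVec_le_of_sum_sq_mulVec_lt {M : Matrix ι ι ℝ}
    (hM : ∀ x : ι → ℝ, ∑ i, x i = 0 → x ≠ 0 → ∑ i, (M *ᵥ x) i ^ 2 < ∑ i, x i ^ 2) :
    ∃ ρ, 0 ≤ ρ ∧ ρ < 1 ∧
      ∀ x : ι → ℝ, ∑ i, x i = 0 → ‖toLp 2 (M *ᵥ x)‖ ≤ ρ * ‖toLp 2 x‖ := by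
  classical
  let V := (ℝ ∙ toLp 2 (1 : ι → ℝ))ᗮ
  let g := (toEuclideanCLM (𝕜 := ℝ) M).comp V.subtypeL
  have hg : ‖g‖ < 1 := by
    refine g.opNorm_lt_one_of_norm_apply_lt fun ⟨x, hx⟩ hx0 => ?_
    have hne : ofLp x ≠ 0 := fun h => hx0 (Subtype.ext (by simpa using congrArg (toLp 2) h))
    rw [mem_orthogonal_span_one_iff] at hx
    refine lt_of_pow_lt_pow_left₀ 2 (norm_nonneg _) ?_
    simpa [g, EuclideanSpace.real_norm_sq_eq] using hM (ofLp x) hx hne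
  refine ⟨‖g‖, g.opNorm_nonneg, hg, fun x hx => ?_⟩
  exact g.le_opNorm ⟨toLp 2 x, (mem_orthogonal_span_one_iff _).2 hx⟩

variable [DecidableEq ι]

theorem sum_sq_mulVec_lt_of_mem_doublyStochastic {M : Matrix ι ι ℝ}
    (hM : M ∈ doublyStochastic ℝ ι) {x : ι → ℝ} {r p q : ι} (hp : M r p ≠ 0) (hq : M r q ≠ 0)
    (hx : x p ≠ x q) : ∑ i, (M *ᵥ x) i ^ 2 < ∑ i, x i ^ 2 := by
  have hsq : StrictConvexOn ℝ Set.univ fun t : ℝ => t ^ 2 :=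
    even_two.strictConvexOn_pow two_ne_zero
  have hrow : ∀ i, (M *ᵥ x) i ^ 2 ≤ ∑ j, M i j * x j ^ 2 := fun i =>
    hsq.convexOn.map_sum_le (fun j _ => nonneg_of_mem_doublyStochastic hM)
      (sum_row_of_mem_doublyStochastic hM i) (fun _ _ => Set.mem_univ _)
  have hrow_lt : (M *ᵥ x) r ^ 2 < ∑ j, M r j * x j ^ 2 :=
    (hsq.map_sum_lt_iff_of_nonneg (fun j _ => nonneg_of_mem_doublyStochastic hM)
      (sum_row_of_mem_doublyStochastic hM r) (fun _ _ => Set.mem_univ _)).2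
      ⟨p, mem_univ _, q, mem_univ _, hp, hq, hx⟩
  calc ∑ i, (M *ᵥ x) i ^ 2 < ∑ i, ∑ j, M i j * x j ^ 2 :=
        sum_lt_sum (fun i _ => hrow i) ⟨r, mem_univ _, hrow_lt⟩
    _ = ∑ j, x j ^ 2 := by
        rw [sum_comm]
        simp only [← sum_mul, sum_col_of_mem_doublyStochastic hM, one_mul]

def laplacian (A : Matrix ι ι ℝ) : Matrix ι ι ℝ := diagonal (fun i => ∑ j, A i j) - A

theorem laplacian_mulVec_one (A : Matrix ι ι ℝ) : laplacian A *ᵥ 1 = 0 := by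
  ext i
  rw [laplacian, sub_mulVec, Pi.sub_apply, mulVec_diagonal, mulVec, dotProduct]
  simp

theorem laplacian_transpose {A : Matrix ι ι ℝ} (hA : A.IsSymm) :
    (laplacian A)ᵀ = laplacian A := by
  rw [laplacian, transpose_sub, diagonal_transpose, hA.eq]

theorem one_sub_smul_laplacian_apply_of_ne (A : Matrix ι ι ℝ) (ε : ℝ) {i j : ι} (h : i ≠ j) :
    (1 - ε • laplacian A) i j = ε * A i j := by
  simp [laplacian, h]

theorem one_sub_smul_laplacian_apply_self (A : Matrix ι ι ℝ) (ε : ℝ) (i : ι) :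
    (1 - ε • laplacian A) i i = 1 - ε * ∑ j, A i j + ε * A i i := by
  simp only [laplacian, Matrix.sub_apply, one_apply_eq, Matrix.smul_apply, diagonal_apply_eq,
    smul_eq_mul]
  ring

theorem one_sub_smul_laplacian_mem_doublyStochastic {A : Matrix ι ι ℝ} (hA : ∀ i j, 0 ≤ A i j)
    (hsymm : A.IsSymm) {ε : ℝ} (hε : 0 ≤ ε) (hdeg : ∀ i, ε * ∑ j, A i j ≤ 1) :
    1 - ε • laplacian A ∈ doublyStochastic ℝ ι := by
  refine mem_doublyStochastic.2 ⟨fun i j => ?_, ?_, ?_⟩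
  · rcases eq_or_ne i j with rfl | h
    · rw [one_sub_smul_laplacian_apply_self]
      nlinarith [hdeg i, hA i i]
    · rw [one_sub_smul_laplacian_apply_of_ne _ _ h]
      exact mul_nonneg hε (hA i j)
  · simp [sub_mulVec, smul_mulVec, laplacian_mulVec_one]
  · rw [← mulVec_transpose, transpose_sub, transpose_smul, transpose_one,
      laplacian_transpose hsymm]
    simp [sub_mulVec, smul_mulVec, laplacian_mulVec_one]

theorem sum_sq_one_sub_smul_laplacian_mulVec_lt {A : Matrix ι ι ℝ} (hA : ∀ i j, 0 ≤ A i j)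
    (hsymm : A.IsSymm) (hconn : ∀ i j, Relation.ReflTransGen (fun p q => 0 < A p q) i j)
    {ε : ℝ} (hε : 0 < ε) (hdeg : ∀ i, ε * ∑ j, A i j < 1) {x : ι → ℝ}
    (hsum : ∑ i, x i = 0) (hx : x ≠ 0) :
    ∑ i, ((1 - ε • laplacian A) *ᵥ x) i ^ 2 < ∑ i, x i ^ 2 := by
  obtain ⟨i, j, hij⟩ := exists_apply_ne_of_sum_eq_zero hsum hx
  obtain ⟨p, q, hpq, hxpq⟩ := exists_rel_apply_ne_of_apply_ne hconn hij
  have hne : p ≠ q := fun h => hxpq (congrArg x h)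
  refine sum_sq_mulVec_lt_of_mem_doublyStochastic
    (one_sub_smul_laplacian_mem_doublyStochastic hA hsymm hε.le fun i => (hdeg i).le)
    (r := p) ?_ ?_ hxpq
  · rw [one_sub_smul_laplacian_apply_self]
    nlinarith [hdeg p, hA p p]
  · rw [one_sub_smul_laplacian_apply_of_ne _ _ hne]
    exact (mul_pos hε hpq).ne'

noncomputable def averagingMatrix (ι : Type*) [Fintype ι] : Matrix ι ι ℝ :=
  (Fintype.card ι : ℝ)⁻¹ • of fun _ _ => 1

theorem one_sub_averagingMatrix_mulVec_apply (x : ι → ℝ) (i : ι) :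
    ((1 - averagingMatrix ι) *ᵥ x) i = x i - (Fintype.card ι : ℝ)⁻¹ * ∑ j, x j := by
  rw [sub_mulVec, one_mulVec, Pi.sub_apply]
  simp [averagingMatrix, mulVec, dotProduct, mul_sum]

theorem one_sub_averagingMatrix_mulVec_sub (x : ι → ℝ) (i j : ι) :
    ((1 - averagingMatrix ι) *ᵥ x) i - ((1 - averagingMatrix ι) *ᵥ x) j = x i - x j := by
  simp only [one_sub_averagingMatrix_mulVec_apply]
  ring

theorem sum_one_sub_averagingMatrix_mulVec (x : ι → ℝ) :
    ∑ i, ((1 - averagingMatrix ι) *ᵥ x) i = 0 := by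
  rcases isEmpty_or_nonempty ι with hι | hι
  · simp
  simp only [one_sub_averagingMatrix_mulVec_apply, sum_sub_distrib, sum_const, card_univ,
    nsmul_eq_mul]
  rw [mul_inv_cancel_left₀ (by simp [Fintype.card_ne_zero]), sub_self]

theorem averagingMatrix_mul_of_mem_doublyStochastic {M : Matrix ι ι ℝ}
    (hM : M ∈ doublyStochastic ℝ ι) : averagingMatrix ι * M = averagingMatrix ι := by
  ext i j
  simp [averagingMatrix, mul_apply, ← mul_sum, sum_col_of_mem_doublyStochastic hM]

theorem mul_averagingMatrix_of_mem_doublyStochastic {M : Matrix ι ι ℝ}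
    (hM : M ∈ doublyStochastic ℝ ι) : M * averagingMatrix ι = averagingMatrix ι := by
  ext i j
  simp [averagingMatrix, mul_apply, ← sum_mul, sum_row_of_mem_doublyStochastic hM]

theorem commute_one_sub_averagingMatrix {M : Matrix ι ι ℝ} (hM : M ∈ doublyStochastic ℝ ι) :
    Commute (1 - averagingMatrix ι) M := by
  rw [Commute, SemiconjBy, sub_mul, mul_sub, averagingMatrix_mul_of_mem_doublyStochastic hM,
    mul_averagingMatrix_of_mem_doublyStochastic hM, one_mul, mul_one]

end Fintype

theorem stmt13_general (N : ℕ) (hN : 0 < N)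
    (A : Matrix (Fin N) (Fin N) ℝ) (hA : ∀ i j, 0 ≤ A i j)
    (hAsymm : A.IsSymm)
    (hconn : ∀ i j : Fin N,
      Relation.ReflTransGen (fun p q : Fin N => 0 < A p q) i j)
    (Lap : Matrix (Fin N) (Fin N) ℝ)
    (hLap : Lap = Matrix.diagonal (fun i => ∑ j, A i j) - A)
    (ε' : ℝ) (hε : 0 < ε')
    (hε' : ε' < 1 / (Finset.univ.sup' ⟨⟨0, hN⟩, Finset.mem_univ _⟩
      (fun i : Fin N => ∑ j, A i j)))
    (σ : ℕ → ℝ)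
    (hσ : Filter.Tendsto σ Filter.atTop (nhds 0))
    (J : Matrix (Fin N) (Fin N) ℝ)
    (hJ : J = (N : ℝ)⁻¹ • Matrix.of (fun _ _ : Fin N => (1 : ℝ)))
    (hatP : ℕ → Fin N → ℝ) (C : ℝ)
    (hbdd : ∀ k, ‖(1 - J).mulVec (hatP k)‖ ≤ C)
    (lam : ℕ → Fin N → ℝ)
    (hrec : ∀ k, lam (k + 1) =
      (1 - ε' • Lap).mulVec (lam k) + σ k • hatP k) :
    ∀ i j : Fin N, Filter.Tendsto (fun k => lam k i - lam k j)
      Filter.atTop (nhds 0) := by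
  replace hLap : Lap = laplacian A := hLap
  replace hJ : J = averagingMatrix (Fin N) := by rw [hJ, averagingMatrix, Fintype.card_fin]
  subst hLap hJ
  have hdeg : ∀ i, ε' * ∑ j, A i j < 1 := fun i =>
    mul_lt_one_of_lt_one_div_sup' hε hε' (mem_univ i)
  have hP := one_sub_smul_laplacian_mem_doublyStochastic hA hAsymm hε.le fun i => (hdeg i).le
  obtain ⟨ρ, hρ₀, hρ₁, hcontr⟩ := exists_norm_mulVec_le_of_sum_sq_mulVec_lt fun x =>
    sum_sq_one_sub_smul_laplacian_mulVec_lt hA hAsymm hconn hε hdeg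
  set δ := fun k => (1 - averagingMatrix (Fin N)) *ᵥ lam k
  have hδ : ∀ k, δ (k + 1) =
      (1 - ε' • laplacian A) *ᵥ δ k + σ k • (1 - averagingMatrix (Fin N)) *ᵥ hatP k := by
    intro k
    simp only [δ, hrec, mulVec_add, mulVec_smul, mulVec_mulVec,
      (commute_one_sub_averagingMatrix hP).eq]
  have hstep : ∀ k, ‖toLp 2 (δ (k + 1))‖ ≤ ρ * ‖toLp 2 (δ k)‖ + |σ k| * ((N : ℝ) ^ (2 : ℝ)⁻¹ * C) :=
    fun k => calc
      _ ≤ ‖toLp 2 ((1 - ε' • laplacian A) *ᵥ δ k)‖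
          + ‖σ k • toLp 2 ((1 - averagingMatrix (Fin N)) *ᵥ hatP k)‖ := by
        rw [hδ, toLp_add, toLp_smul]
        exact norm_add_le _ _
      _ ≤ _ := by
        rw [norm_smul, Real.norm_eq_abs]
        gcongr
        · exact hcontr _ (sum_one_sub_averagingMatrix_mulVec _)
        · simpa using (norm_toLp_two_le _).trans
            (mul_le_mul_of_nonneg_left (hbdd k) (by positivity))
  have hδnorm : Tendsto (fun k => ‖toLp 2 (δ k)‖) atTop (𝓝 0) :=
    tendsto_zero_of_le_mul_add hρ₀ hρ₁ (fun _ => norm_nonneg _) hstep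
      (by simpa using hσ.abs.mul_const ((N : ℝ) ^ (2 : ℝ)⁻¹ * C))
  intro i j
  have hcoord := (((EuclideanSpace.proj (𝕜 := ℝ) i).continuous.sub
    (EuclideanSpace.proj j).continuous).tendsto 0).comp
    (tendsto_zero_iff_norm_tendsto_zero.2 hδnorm)
  simpa [Function.comp_def, δ, one_sub_averagingMatrix_mulVec_sub] using hcoord

/-- for the coupled iteration
`λ(k+1) = (I - ε'L)λ(k) + σ(k)ΔP̂(k)` on a connected undirected graph with
vanishing gains and bounded disagreement of `ΔP̂`, the disagreement of `λ`
vanishes: `λ_i(k) - λ_j(k) → 0`. -/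
theorem stmt13 (N : ℕ) (hN : 0 < N)
    (A : Matrix (Fin N) (Fin N) ℝ) (hA : ∀ i j, 0 ≤ A i j)
    (hAsymm : A.IsSymm)
    (hconn : ∀ i j : Fin N,
      Relation.ReflTransGen (fun p q : Fin N => 0 < A p q) i j)
    (Lap : Matrix (Fin N) (Fin N) ℝ)
    (hLap : Lap = Matrix.diagonal (fun i => ∑ j, A i j) - A)
    (ε' : ℝ) (hε : 0 < ε')
    (hε' : ε' < 1 / (Finset.univ.sup' ⟨⟨0, hN⟩, Finset.mem_univ _⟩
      (fun i : Fin N => ∑ j, A i j)))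
    (σ : ℕ → ℝ) (hσpos : ∀ k, 0 < σ k)
    (hσ : Filter.Tendsto σ Filter.atTop (nhds 0))
    (J : Matrix (Fin N) (Fin N) ℝ)
    (hJ : J = (N : ℝ)⁻¹ • Matrix.of (fun _ _ : Fin N => (1 : ℝ)))
    (hatP : ℕ → Fin N → ℝ) (C : ℝ)
    (hbdd : ∀ k, ‖(1 - J).mulVec (hatP k)‖ ≤ C)
    (lam : ℕ → Fin N → ℝ)
    (hrec : ∀ k, lam (k + 1) =
      (1 - ε' • Lap).mulVec (lam k) + σ k • hatP k) :
    ∀ i j : Fin N, Filter.Tendsto (fun k => lam k i - lam k j)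
      Filter.atTop (nhds 0) :=
  stmt13_general N hN A hA hAsymm hconn Lap hLap ε' hε hε' σ hσ J hJ hatP C hbdd lam hrec
end

section
/- Consider sequences in ℝ^N satisfying Y(k+1) = (I_N - μL)ΔP̂(k) + ΔP(k+1) - ΔP(k) and ΔP̂(k+1) = (I_N - C)Y(k+1), with L the Laplacian of an undirected graph (so 1_N^T L = 0), C = A_{0*} a diagonal 0-1 matrix, and scalar update P_MG(k+1) = P_MG(k) + 1_N^T C Y(k+1) (equivalently Σ_i a_{0i} y_i(k+1)). Then the quantity 1_N^T[ΔP̂(k) - ΔP(k)] + P_MG(k) is invariant in k; in particular if it is 0 at k = 0 then Σ_i ΔP̂_i(k) + P_MG(k) = Σ_i ΔP_i(k) for all k ≥ 0. -/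
/-!
Since `1ᵀ L = 0`, every column of `I - μL` sums to one, so `1ᵀ (I - μL) x = 1ᵀ x`: the
consensus step moves estimates between nodes without changing their total. The only leak is
`1ᵀ C Y(k+1)`, which the `(I - C)` step removes from the estimates and which `P_MG` absorbs,
while the injected increment `ΔP(k+1) - ΔP(k)` changes `1ᵀ ΔP̂` and `1ᵀ ΔP` by the same amount.
-/

open Matrix

namespace Matrix

theorem sum_mulVec_eq_sum_colSum_mul {m n α : Type*} [Fintype m] [Fintype n]
    [NonUnitalNonAssocSemiring α] (A : Matrix m n α) (v : n → α) :
    ∑ i, (A *ᵥ v) i = ∑ j, (∑ i, A i j) * v j := by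
  simp only [mulVec, dotProduct, Finset.sum_mul]
  exact Finset.sum_comm

variable {n : Type*} [Fintype n] [DecidableEq n] {α : Type*} [CommRing α]

theorem sum_one_sub_smul_mulVec_of_colSum_eq_zero {L : Matrix n n α}
    (hL : ∀ j, ∑ i, L i j = 0) (μ : α) (v : n → α) :
    ∑ i, ((1 - μ • L) *ᵥ v) i = ∑ i, v i := by
  have hcol : ∀ j, ∑ i, (1 - μ • L) i j = 1 := fun j => by
    simp [sub_apply, Finset.sum_sub_distrib, ← Finset.mul_sum, hL j, one_apply]
  simp only [sum_mulVec_eq_sum_colSum_mul, hcol, one_mul]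

theorem sum_one_sub_diagonal_mulVec (a v : n → α) :
    ∑ i, ((1 - diagonal a) *ᵥ v) i = ∑ i, v i - ∑ i, a i * v i := by
  have hcol : ∀ j, ∑ i, (1 - diagonal a) i j = 1 - a j := fun j => by
    simp [sub_apply, Finset.sum_sub_distrib, one_apply, diagonal_apply]
  simp only [sum_mulVec_eq_sum_colSum_mul, hcol, sub_mul, one_mul, Finset.sum_sub_distrib]

end Matrix

theorem stmt16_general (N : ℕ)
    (Lap : Matrix (Fin N) (Fin N) ℝ)
    (hLapcol : ∀ j : Fin N, ∑ i, Lap i j = 0)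
    (μ : ℝ)
    (C : Matrix (Fin N) (Fin N) ℝ) (a0 : Fin N → ℝ)
    (hC : C = Matrix.diagonal a0)
    (dP hatP Y : ℕ → Fin N → ℝ) (PMG : ℕ → ℝ)
    (hY : ∀ k, Y (k + 1) =
      (1 - μ • Lap).mulVec (hatP k) + (dP (k + 1) - dP k))
    (hhatP : ∀ k, hatP (k + 1) = (1 - C).mulVec (Y (k + 1)))
    (hPMG : ∀ k, PMG (k + 1) = PMG k + ∑ i, a0 i * Y (k + 1) i) :
    (∀ k : ℕ, (∑ i, (hatP k i - dP k i)) + PMG k =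
      (∑ i, (hatP 0 i - dP 0 i)) + PMG 0) ∧
    ((∑ i, (hatP 0 i - dP 0 i)) + PMG 0 = 0 →
      ∀ k : ℕ, (∑ i, hatP k i) + PMG k = ∑ i, dP k i) := by
  have step : ∀ k, (∑ i, (hatP (k + 1) i - dP (k + 1) i)) + PMG (k + 1) =
      (∑ i, (hatP k i - dP k i)) + PMG k := fun k => by
    have hsumY : ∑ i, Y (k + 1) i = ∑ i, hatP k i + ∑ i, dP (k + 1) i - ∑ i, dP k i := by
      simp only [hY k, Pi.add_apply, Pi.sub_apply, Finset.sum_add_distrib, Finset.sum_sub_distrib,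
        sum_one_sub_smul_mulVec_of_colSum_eq_zero hLapcol]
      ring
    simp only [Finset.sum_sub_distrib, hhatP k, hC, sum_one_sub_diagonal_mulVec, hsumY, hPMG k]
    ring
  have invariant : ∀ k, (∑ i, (hatP k i - dP k i)) + PMG k =
      (∑ i, (hatP 0 i - dP 0 i)) + PMG 0 := fun k => by
    induction k with
    | zero => rfl
    | succ k ih => rw [step k, ih]
  refine ⟨invariant, fun h0 k => ?_⟩
  have hk := (invariant k).trans h0
  rw [Finset.sum_sub_distrib] at hk
  linarith

/-- for the grid-connected estimation scheme, the quantity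
`1ᵀ[ΔP̂(k) - ΔP(k)] + P_MG(k)` is invariant in `k`; in particular, if it
vanishes at `k = 0` then `Σ ΔP̂_i(k) + P_MG(k) = Σ ΔP_i(k)` for all `k`. -/
theorem stmt16 (N : ℕ)
    (Lap : Matrix (Fin N) (Fin N) ℝ)
    (hLapcol : ∀ j : Fin N, ∑ i, Lap i j = 0)
    (μ : ℝ)
    (C : Matrix (Fin N) (Fin N) ℝ) (a0 : Fin N → ℝ)
    (ha0 : ∀ i, a0 i = 0 ∨ a0 i = 1)
    (hC : C = Matrix.diagonal a0)
    (dP hatP Y : ℕ → Fin N → ℝ) (PMG : ℕ → ℝ)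
    (hY : ∀ k, Y (k + 1) =
      (1 - μ • Lap).mulVec (hatP k) + (dP (k + 1) - dP k))
    (hhatP : ∀ k, hatP (k + 1) = (1 - C).mulVec (Y (k + 1)))
    (hPMG : ∀ k, PMG (k + 1) = PMG k + ∑ i, a0 i * Y (k + 1) i) :
    (∀ k : ℕ, (∑ i, (hatP k i - dP k i)) + PMG k =
      (∑ i, (hatP 0 i - dP 0 i)) + PMG 0) ∧
    ((∑ i, (hatP 0 i - dP 0 i)) + PMG 0 = 0 →
      ∀ k : ℕ, (∑ i, hatP k i) + PMG k = ∑ i, dP k i) :=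
  stmt16_general N Lap hLapcol μ C a0 hC dP hatP Y PMG hY hhatP hPMG
end

section
/- Let L be the Laplacian of a connected weighted undirected graph, 0 < μ' < 1/max_i Σ_j a_ij, and suppose ‖(I_N - μ'L)^k - J_N‖ ≤ c ρ^k with ρ ∈ (0,1). Let ΔP : ℕ → ℝ^N be a sequence whose increments vanish: ΔP(k+1) - ΔP(k) → 0. Then the disagreement δ(k) = (I_N - J_N) ΔP̂(k) of the solution to ΔP̂(k+1) = (I_N - μ'L)ΔP̂(k) + ΔP(k+1) - ΔP(k) converges to 0 as k → ∞. -/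
/-! Since `J` is idempotent and `L` has zero row and column sums, `J` is absorbed by
`M = I - μ'L` on both sides. Hence `δ(k+1) = (M - J) δ(k) + (I - J)(ΔP(k+1) - ΔP(k))` and
`(M - J)^k = M^k - J` for `k ≥ 1`, so the powers of `M - J` are summable in norm. For such an
operator the variation-of-constants formula writes `δ(k)` as a free term `(M - J)^k δ(0)` plus a
convolution of the powers `(M - J)^i` with a null input; dominated termwise by
`‖(M - J)^i‖ · sup ‖input‖`, the convolution tends to 0 by Tannery's theorem. -/

open scoped Matrix.Norms.L2Operator
open Filter Finset Topology

section AbsorbingIdempotent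

variable {R : Type*} [Ring R] {M J : R}

theorem sub_pow_succ_of_absorbing (hJ : IsIdempotentElem J) (hMJ : M * J = J) (hJM : J * M = J)
    (k : ℕ) : (M - J) ^ (k + 1) = M ^ (k + 1) - J := by
  have hpowJ : ∀ k : ℕ, M ^ k * J = J := fun k => by
    induction k with
    | zero => rw [pow_zero, one_mul]
    | succ k ih => rw [pow_succ', mul_assoc, ih, hMJ]
  induction k with
  | zero => rw [zero_add, pow_one, pow_one]
  | succ k ih =>
    rw [pow_succ, ih, sub_mul, mul_sub, mul_sub, hpowJ, hJM, hJ.eq, ← pow_succ, sub_self, sub_zero]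

theorem one_sub_mul_eq_sub_mul_one_sub (hJ : IsIdempotentElem J) (hMJ : M * J = J)
    (hJM : J * M = J) : (1 - J) * M = (M - J) * (1 - J) := by
  rw [sub_mul, one_mul, hJM, mul_sub, mul_one, sub_mul, hMJ, hJ.eq, sub_self, sub_zero]

end AbsorbingIdempotent

namespace ContinuousLinearMap

variable {𝕜 E : Type*} [NontriviallyNormedField 𝕜] [NormedAddCommGroup E] [NormedSpace 𝕜 E]

theorem eq_pow_apply_add_sum_of_rec (T : E →L[𝕜] E) {v w : ℕ → E}
    (hv : ∀ k, v (k + 1) = T (v k) + w k) (k : ℕ) :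
    v k = (T ^ k) (v 0) + ∑ i ∈ range k, (T ^ i) (w (k - 1 - i)) := by
  induction k with
  | zero => simp
  | succ k ih =>
    rw [hv, ih, map_add, map_sum, sum_range_succ', add_assoc]
    simp only [pow_succ', pow_zero, mul_apply_eq_comp, one_apply_eq_self, Nat.add_sub_cancel,
      Nat.sub_zero, Nat.sub_sub, add_comm 1]

theorem tendsto_sum_range_pow_apply_of_summable [CompleteSpace E] (T : E →L[𝕜] E)
    (hT : Summable (‖T ^ ·‖)) {w : ℕ → E} (hw : Tendsto w atTop (𝓝 0)) :
    Tendsto (fun k => ∑ i ∈ range k, (T ^ i) (w (k - 1 - i))) atTop (𝓝 0) := by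
  obtain ⟨B, hB⟩ := hw.norm.bddAbove_range
  have hwB : ∀ k, ‖w k‖ ≤ B := fun k => hB ⟨k, rfl⟩
  have hind : (fun k => ∑ i ∈ range k, (T ^ i) (w (k - 1 - i))) = fun k =>
      ∑' i, (range k : Set ℕ).indicator (fun i => (T ^ i) (w (k - 1 - i))) i :=
    funext fun k => sum_eq_tsum_indicator _ _
  rw [hind, ← tsum_zero]
  refine tendsto_tsum_of_dominated_convergence (hT.mul_right B) (fun i => ?_) ?_
  · have hlim : Tendsto (fun k => (T ^ i) (w (k - 1 - i))) atTop (𝓝 0) := by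
      simpa [Function.comp_def] using ((T ^ i).continuous.tendsto 0).comp
        (hw.comp ((tendsto_sub_atTop_nat i).comp (tendsto_sub_atTop_nat 1)))
    refine hlim.congr' ?_
    filter_upwards [eventually_gt_atTop i] with k hk
    simp [hk]
  · refine Eventually.of_forall fun k i => ?_
    by_cases hi : i < k
    · simpa [hi] using (T ^ i).le_opNorm_of_le (hwB _)
    · simpa [hi] using mul_nonneg (norm_nonneg _) ((norm_nonneg _).trans (hwB 0))

theorem tendsto_zero_of_summable_norm_pow [CompleteSpace E] (T : E →L[𝕜] E)
    (hT : Summable (‖T ^ ·‖)) {v w : ℕ → E} (hw : Tendsto w atTop (𝓝 0))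
    (hv : ∀ k, v (k + 1) = T (v k) + w k) :
    Tendsto v atTop (𝓝 0) := by
  have hfree : Tendsto (fun k => (T ^ k) (v 0)) atTop (𝓝 0) :=
    squeeze_zero_norm (fun k => (T ^ k).le_opNorm (v 0))
      (by simpa using hT.tendsto_atTop_zero.mul_const ‖v 0‖)
  refine (tendsto_congr fun k => T.eq_pow_apply_add_sum_of_rec hv k).mpr ?_
  simpa only [add_zero] using hfree.add (T.tendsto_sum_range_pow_apply_of_summable hT hw)

end ContinuousLinearMap

namespace Matrix

section RowSums

variable {l m n R : Type*} [NonAssocSemiring R]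

theorem mul_of_one_eq_zero [Fintype n] {L : Matrix m n R} (h : ∀ i, ∑ j, L i j = 0) :
    L * of (fun (_ : n) (_ : l) => (1 : R)) = 0 := by
  ext i k
  simp [mul_apply, h]

theorem of_one_mul_eq_zero [Fintype m] {L : Matrix m n R} (h : ∀ j, ∑ i, L i j = 0) :
    of (fun (_ : l) (_ : m) => (1 : R)) * L = 0 := by
  ext k j
  simp [mul_apply, h]

theorem of_one_mul_of_one [Fintype m] :
    of (fun (_ : l) (_ : m) => (1 : R)) * of (fun (_ : m) (_ : n) => (1 : R)) =
      (Fintype.card m : R) • of (fun (_ : l) (_ : n) => (1 : R)) := by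
  ext i k
  simp [mul_apply]

end RowSums

theorem isIdempotentElem_inv_card_smul_of_one {n K : Type*} [Fintype n] [Nonempty n] [Field K]
    [CharZero K] : IsIdempotentElem ((Fintype.card n : K)⁻¹ • of (fun (_ _ : n) => (1 : K))) := by
  have hcard : (Fintype.card n : K) ≠ 0 := Nat.cast_ne_zero.mpr Fintype.card_ne_zero
  rw [IsIdempotentElem, smul_mul_smul, of_one_mul_of_one, smul_smul, inv_mul_cancel_right₀ hcard]

theorem sum_diagonal_sum_sub_apply {n R : Type*} [Fintype n] [DecidableEq n] [AddCommGroup R]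
    (A : Matrix n n R) (i : n) : ∑ j, (diagonal (fun i => ∑ j, A i j) - A) i j = 0 := by
  simp [sub_apply, sum_sub_distrib, diagonal_apply]

section L2OperatorNorm

variable {𝕜 n : Type*} [RCLike 𝕜] [Fintype n] [DecidableEq n]

theorem tendsto_zero_of_summable_norm_pow (B : Matrix n n 𝕜) (hB : Summable (‖B ^ ·‖))
    {v w : ℕ → n → 𝕜} (hw : Tendsto w atTop (𝓝 0))
    (hv : ∀ k, v (k + 1) = B *ᵥ v k + w k) :
    Tendsto v atTop (𝓝 0) := by
  have hT : Summable (‖toEuclideanCLM (𝕜 := 𝕜) B ^ ·‖) := by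
    simpa only [← map_pow, l2_opNorm_toEuclideanCLM] using hB
  have hlim := (toEuclideanCLM (𝕜 := 𝕜) B).tendsto_zero_of_summable_norm_pow hT
    (v := fun k => WithLp.toLp 2 (v k)) (w := fun k => WithLp.toLp 2 (w k))
    (((PiLp.continuous_toLp 2 _).tendsto' 0 0 (WithLp.toLp_zero 2)).comp hw)
    (fun k => by rw [hv, toEuclideanCLM_toLp, WithLp.toLp_add])
  simpa [Function.comp_def] using ((PiLp.continuous_ofLp 2 fun _ : n => 𝕜).tendsto 0).comp hlim

end L2OperatorNorm

end Matrix

theorem stmt17_general (N : ℕ) (hN : 0 < N)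
    (A : Matrix (Fin N) (Fin N) ℝ) (hAsymm : A.IsSymm)
    (Lap : Matrix (Fin N) (Fin N) ℝ)
    (hLap : Lap = Matrix.diagonal (fun i => ∑ j, A i j) - A)
    (μ' : ℝ)
    (J : Matrix (Fin N) (Fin N) ℝ)
    (hJ : J = (N : ℝ)⁻¹ • Matrix.of (fun _ _ : Fin N => (1 : ℝ)))
    (c ρ : ℝ) (hρ : ρ ∈ Set.Ioo (0 : ℝ) 1)
    (hexp : ∀ k : ℕ, ‖(1 - μ' • Lap) ^ k - J‖ ≤ c * ρ ^ k)
    (dP : ℕ → Fin N → ℝ)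
    (hdP : Filter.Tendsto (fun k => dP (k + 1) - dP k) Filter.atTop (nhds 0))
    (hatP : ℕ → Fin N → ℝ)
    (hrec : ∀ k, hatP (k + 1) =
      (1 - μ' • Lap).mulVec (hatP k) + (dP (k + 1) - dP k)) :
    Filter.Tendsto (fun k => (1 - J).mulVec (hatP k))
      Filter.atTop (nhds 0) := by
  have : Nonempty (Fin N) := ⟨⟨0, hN⟩⟩
  have hrow : ∀ i, ∑ j, Lap i j = 0 := hLap ▸ A.sum_diagonal_sum_sub_apply
  have hLsymm : Lap.IsSymm := hLap ▸ (Matrix.isSymm_diagonal _).sub hAsymm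
  have hcol : ∀ j, ∑ i, Lap i j = 0 := fun j => by
    simpa only [hLsymm.apply j] using hrow j
  have hJidem : IsIdempotentElem J := by
    simpa [hJ] using Matrix.isIdempotentElem_inv_card_smul_of_one (n := Fin N) (K := ℝ)
  have hMJ : (1 - μ' • Lap) * J = J := by
    rw [sub_mul, one_mul, smul_mul_assoc, hJ, Matrix.mul_smul, Matrix.mul_of_one_eq_zero hrow,
      smul_zero, smul_zero, sub_zero]
  have hJM : J * (1 - μ' • Lap) = J := by
    rw [mul_sub, mul_one, mul_smul_comm, hJ, Matrix.smul_mul, Matrix.of_one_mul_eq_zero hcol,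
      smul_zero, smul_zero, sub_zero]
  have hsum : Summable (‖(1 - μ' • Lap - J) ^ ·‖) := by
    refine Summable.of_norm_bounded_eventually_nat
      ((summable_geometric_of_lt_one hρ.1.le hρ.2).mul_left c) ?_
    filter_upwards [eventually_ne_atTop 0] with k hk
    obtain ⟨k, rfl⟩ := Nat.exists_eq_succ_of_ne_zero hk
    rw [norm_norm, sub_pow_succ_of_absorbing hJidem hMJ hJM]
    exact hexp _
  refine (1 - μ' • Lap - J).tendsto_zero_of_summable_norm_pow hsum
    (w := fun k => (1 - J).mulVec (dP (k + 1) - dP k)) ?_ fun k => ?_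
  · simpa [Function.comp_def] using
      ((continuous_const.matrix_mulVec continuous_id).tendsto 0).comp hdP
  · rw [hrec, Matrix.mulVec_add, Matrix.mulVec_mulVec,
      one_sub_mul_eq_sub_mul_one_sub hJidem hMJ hJM, ← Matrix.mulVec_mulVec]

/-- if `‖(I - μ'L)^k - J‖ ≤ c ρ^k` and the increments of `ΔP`
vanish, then the disagreement `(I - J)ΔP̂(k)` of the averaged-mismatch
iteration tends to zero. -/
theorem stmt17 (N : ℕ) (hN : 0 < N)
    (A : Matrix (Fin N) (Fin N) ℝ) (hA : ∀ i j, 0 ≤ A i j)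
    (hAsymm : A.IsSymm)
    (hconn : ∀ i j : Fin N,
      Relation.ReflTransGen (fun p q : Fin N => 0 < A p q) i j)
    (Lap : Matrix (Fin N) (Fin N) ℝ)
    (hLap : Lap = Matrix.diagonal (fun i => ∑ j, A i j) - A)
    (μ' : ℝ) (hμ : 0 < μ')
    (hμ' : μ' < 1 / (Finset.univ.sup' ⟨⟨0, hN⟩, Finset.mem_univ _⟩
      (fun i : Fin N => ∑ j, A i j)))
    (J : Matrix (Fin N) (Fin N) ℝ)
    (hJ : J = (N : ℝ)⁻¹ • Matrix.of (fun _ _ : Fin N => (1 : ℝ)))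
    (c ρ : ℝ) (hρ : ρ ∈ Set.Ioo (0 : ℝ) 1) (hc : 0 < c)
    (hexp : ∀ k : ℕ, ‖(1 - μ' • Lap) ^ k - J‖ ≤ c * ρ ^ k)
    (dP : ℕ → Fin N → ℝ)
    (hdP : Filter.Tendsto (fun k => dP (k + 1) - dP k) Filter.atTop (nhds 0))
    (hatP : ℕ → Fin N → ℝ)
    (hrec : ∀ k, hatP (k + 1) =
      (1 - μ' • Lap).mulVec (hatP k) + (dP (k + 1) - dP k)) :
    Filter.Tendsto (fun k => (1 - J).mulVec (hatP k))
      Filter.atTop (nhds 0) :=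
  stmt17_general N hN A hAsymm Lap hLap μ' J hJ c ρ hρ hexp dP hdP hatP hrec
end
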